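/- arXiv:1912.05335 — 3 statements merged into one kernel-verified Lean document; each statement's English description precedes it below -/
import Mathlib

section
/- Let k ≥ 0, let y ∈ ℝ^{2^k} be a unit vector (‖y‖ = 1), and let α_j, α̃_j ∈ ℝ for 0 ≤ j < 2^k satisfy |α_j − α̃_j| ≤ δ for some δ ≥ 0. Then the Euclidean distance between the corresponding splits satisfies ‖split(y,α) − split(y,α̃)‖ ≤ √2 · δ. -/
/-!
The coordinates `2j, 2j+1` of `split(y,α) − split(y,α̃)` are `y_j` times the chord between the
points of angles `α_j` and `α̃_j` on the unit circle, and a chord is at most as long as its arc,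
`|α_j − α̃_j| ≤ δ`. Summing over `j` gives the sharper bound `‖y‖ δ`.
-/

/-- The index `⌊i/2⌋ : Fin (2^k)` of an index `i : Fin (2^(k+1))`. -/
def halfIdx {k : ℕ} (i : Fin (2 ^ (k + 1))) : Fin (2 ^ k) :=
  ⟨i.val / 2, by have := i.isLt; simp only [pow_succ] at this; omega⟩

/-- The split of a vector `y ∈ ℝ^{2^k}` by angles `α`: the vector in
`ℝ^{2^{k+1}}` with entries `split(y,α)_{2j} = y_j cos α_j` and
`split(y,α)_{2j+1} = y_j sin α_j`. -/
noncomputable def split (k : ℕ) (y α : Fin (2 ^ k) → ℝ) :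
    EuclideanSpace ℝ (Fin (2 ^ (k + 1))) :=
  WithLp.toLp 2 fun i =>
    if i.val % 2 = 0 then y (halfIdx i) * Real.cos (α (halfIdx i))
    else y (halfIdx i) * Real.sin (α (halfIdx i))

open Real

theorem cos_sub_cos_sq_add_sin_sub_sin_sq_le (a b : ℝ) :
    (cos a - cos b) ^ 2 + (sin a - sin b) ^ 2 ≤ (a - b) ^ 2 := by
  nlinarith [cos_sub a b, one_sub_sq_div_two_le_cos (x := a - b), sin_sq_add_cos_sq a,
    sin_sq_add_cos_sq b]

theorem sum_halfIdx_mod_two {M : Type*} [AddCommMonoid M] (k : ℕ) (g : Fin (2 ^ k) → ℕ → M) :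
    ∑ i : Fin (2 ^ (k + 1)), g (halfIdx i) (i.val % 2) = ∑ j, (g j 0 + g j 1) := by
  rw [← (finProdFinEquiv.trans (finCongr (pow_succ 2 k).symm)).sum_comp, Fintype.sum_prod_type]
  refine Finset.sum_congr rfl fun j _ => ?_
  have hodd : (1 + 2 * j.val) / 2 = j.val := by omega
  simp [Fin.sum_univ_two, halfIdx, finProdFinEquiv, hodd]

theorem norm_split_sub_split_sq (k : ℕ) (y : EuclideanSpace ℝ (Fin (2 ^ k)))
    (α αt : Fin (2 ^ k) → ℝ) :
    ‖split k y α - split k y αt‖ ^ 2 =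
      ∑ j, y j ^ 2 * ((cos (α j) - cos (αt j)) ^ 2 + (sin (α j) - sin (αt j)) ^ 2) := by
  let g (j : Fin (2 ^ k)) (p : ℕ) : ℝ :=
    if p = 0 then (y j * cos (α j) - y j * cos (αt j)) ^ 2
    else (y j * sin (α j) - y j * sin (αt j)) ^ 2
  calc ‖split k y α - split k y αt‖ ^ 2
      = ∑ i : Fin (2 ^ (k + 1)), g (halfIdx i) (i.val % 2) := by
        rw [EuclideanSpace.real_norm_sq_eq]
        refine Finset.sum_congr rfl fun i _ => ?_
        simp only [split, PiLp.sub_apply, g]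
        split_ifs <;> rfl
    _ = ∑ j, (g j 0 + g j 1) := sum_halfIdx_mod_two k g
    _ = _ := Finset.sum_congr rfl fun j _ => by
        simp only [g, ↓reduceIte, one_ne_zero]
        ring

theorem norm_split_sub_split_le (k : ℕ) (y : EuclideanSpace ℝ (Fin (2 ^ k)))
    (α αt : Fin (2 ^ k) → ℝ) {δ : ℝ} (hδ : 0 ≤ δ) (h : ∀ j, |α j - αt j| ≤ δ) :
    ‖split k y α - split k y αt‖ ≤ ‖y‖ * δ := by
  rw [← pow_le_pow_iff_left₀ (norm_nonneg _) (by positivity) two_ne_zero,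
    norm_split_sub_split_sq, mul_pow, EuclideanSpace.real_norm_sq_eq, Finset.sum_mul]
  gcongr with j
  calc _ ≤ (α j - αt j) ^ 2 := cos_sub_cos_sq_add_sin_sub_sin_sq_le _ _
    _ ≤ δ ^ 2 := sq_le_sq.mpr ((h j).trans (le_abs_self δ))

/-- If `y ∈ ℝ^{2^k}` is a unit vector and the two families of angles satisfy
`|α_j − α̃_j| ≤ δ` with `δ ≥ 0`, then
`‖split(y,α) − split(y,α̃)‖ ≤ √2 · δ`. -/
theorem norm_split_sub_split_of_close_angles (k : ℕ)
    (y : EuclideanSpace ℝ (Fin (2 ^ k))) (hy : ‖y‖ = 1)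
    (α αt : Fin (2 ^ k) → ℝ) (δ : ℝ) (hδ : 0 ≤ δ)
    (h : ∀ j, |α j - αt j| ≤ δ) :
    ‖split k y α - split k y αt‖ ≤ Real.sqrt 2 * δ :=
  calc ‖split k y α - split k y αt‖ ≤ ‖y‖ * δ := norm_split_sub_split_le k y α αt hδ h
    _ = δ := by rw [hy, one_mul]
    _ ≤ √2 * δ := le_mul_of_one_le_left hδ (one_le_sqrt.mpr one_le_two)
end

section
/- Let n ≥ 1, N = 2^n, let x ∈ ℝ^N be nonzero with x_i ≥ 0 for all i, and set α_i = arccos(x_i / max_j x_j) ∈ [0, π/2]. Let δ > 0 and let α̃_i ∈ ℝ satisfy 0 ≤ α̃_i ≤ α_i and α_i − α̃_i < δ for all i. Let x_r ∈ ℝ^N be the unit vector with entries cos α_i / √(Σ_j cos² α_j) (equivalently x_i/‖x‖), and let x̃_r be the unit vector with entries cos α̃_i / √(Σ_j cos² α̃_j). Then the Euclidean distance satisfies ‖x_r − x̃_r‖ ≤ 2^{2n+1}·δ. -/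
/-!
At an index where `x` is maximal, `α_i = arccos 1 = 0`, so the vector `a` of the cosines
`cos α_i` has norm at least `1`. Cosine is `1`-Lipschitz, so the vector `b` of the cosines
`cos α̃_i` lies within `√N · δ` of `a`. Finally `‖u/‖u‖ − v/‖v‖‖ ≤ 2‖u − v‖/‖u‖`, whence
`‖x_r − x̃_r‖ ≤ 2 √N δ ≤ 2^{2n+1} δ`.
-/

noncomputable def maxEntry (n : ℕ) (x : Fin (2 ^ n) → ℝ) : ℝ :=
  Finset.univ.sup' ⟨⟨0, Nat.two_pow_pos n⟩, Finset.mem_univ _⟩ x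

theorem norm_normalize_sub_normalize_le {V : Type*} [NormedAddCommGroup V] [NormedSpace ℝ V]
    {u : V} (hu : u ≠ 0) (v : V) :
    ‖NormedSpace.normalize u - NormedSpace.normalize v‖ ≤ 2 * ‖u - v‖ / ‖u‖ := by
  have hu' : 0 < ‖u‖ := norm_pos_iff.mpr hu
  have hsplit : NormedSpace.normalize u - NormedSpace.normalize v =
      ‖u‖⁻¹ • (u - v) + (‖u‖⁻¹ - ‖v‖⁻¹) • v := by
    simp only [NormedSpace.normalize, smul_sub, sub_smul]
    abel
  have hrescale : ‖(‖u‖⁻¹ - ‖v‖⁻¹) • v‖ ≤ ‖u - v‖ / ‖u‖ := by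
    rcases eq_or_ne v 0 with rfl | hv
    · simp only [smul_zero, norm_zero]
      positivity
    have hv' : 0 < ‖v‖ := norm_pos_iff.mpr hv
    calc ‖(‖u‖⁻¹ - ‖v‖⁻¹) • v‖ = |‖v‖ - ‖u‖| / ‖u‖ := by
          rw [norm_smul, Real.norm_eq_abs, inv_sub_inv hu'.ne' hv'.ne', abs_div,
            abs_of_pos (mul_pos hu' hv')]
          field_simp
      _ ≤ ‖u - v‖ / ‖u‖ := by
          gcongr
          rw [abs_sub_comm]
          exact abs_norm_sub_norm_le u v
  calc ‖NormedSpace.normalize u - NormedSpace.normalize v‖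
      ≤ ‖‖u‖⁻¹ • (u - v)‖ + ‖(‖u‖⁻¹ - ‖v‖⁻¹) • v‖ :=
        hsplit ▸ norm_add_le _ _
    _ ≤ ‖u - v‖ / ‖u‖ + ‖u - v‖ / ‖u‖ := by
        gcongr
        rw [norm_smul, norm_inv, norm_norm, inv_mul_eq_div]
    _ = 2 * ‖u - v‖ / ‖u‖ := by ring

theorem EuclideanSpace.norm_le_sqrt_card_mul {ι : Type*} [Fintype ι]
    {x : EuclideanSpace ℝ ι} {δ : ℝ} (h : ∀ i, |x i| ≤ δ) :
    ‖x‖ ≤ √(Fintype.card ι) * δ := by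
  rcases isEmpty_or_nonempty ι with hι | ⟨⟨i⟩⟩
  · simp [Subsingleton.elim x 0]
  have hδ : 0 ≤ δ := (abs_nonneg _).trans (h i)
  calc ‖x‖ = √(∑ i, x i ^ 2) := by simp [EuclideanSpace.norm_eq]
    _ ≤ √(∑ _i : ι, δ ^ 2) := Real.sqrt_le_sqrt <| Finset.sum_le_sum fun i _ =>
        sq_le_sq' (abs_le.mp (h i)).1 (abs_le.mp (h i)).2
    _ = √(Fintype.card ι) * δ := by
        rw [Finset.sum_const, Finset.card_univ, nsmul_eq_mul, Real.sqrt_mul (by positivity),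
          Real.sqrt_sq hδ]

theorem EuclideanSpace.norm_normalize_toLp_sub_normalize_toLp {ι : Type*} [Fintype ι]
    (a b : ι → ℝ) :
    ‖NormedSpace.normalize (WithLp.toLp 2 a : EuclideanSpace ℝ ι) -
        NormedSpace.normalize (WithLp.toLp 2 b)‖ =
      √(∑ i, (a i / √(∑ j, a j ^ 2) - b i / √(∑ j, b j ^ 2)) ^ 2) := by
  simp [NormedSpace.normalize, EuclideanSpace.norm_eq, div_eq_inv_mul]

section maxEntry

variable {n : ℕ}

theorem le_maxEntry (x : Fin (2 ^ n) → ℝ) (i : Fin (2 ^ n)) : x i ≤ maxEntry n x :=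
  Finset.le_sup' x (Finset.mem_univ i)

theorem exists_eq_maxEntry (x : Fin (2 ^ n) → ℝ) : ∃ j, x j = maxEntry n x := by
  obtain ⟨j, -, hj⟩ := Finset.exists_mem_eq_sup' _ x
  exact ⟨j, hj.symm⟩

theorem maxEntry_pos {x : Fin (2 ^ n) → ℝ} (hx0 : x ≠ 0) (hxnn : ∀ i, 0 ≤ x i) :
    0 < maxEntry n x := by
  obtain ⟨i, hi⟩ := Function.ne_iff.mp hx0
  exact ((hxnn i).lt_of_ne (Ne.symm hi)).trans_le (le_maxEntry x i)

end maxEntry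

theorem probabilistic_fidelity_general (n : ℕ) (x : Fin (2 ^ n) → ℝ)
    (hx0 : x ≠ 0) (hxnn : ∀ i, 0 ≤ x i)
    (α : Fin (2 ^ n) → ℝ)
    (hα : ∀ i, α i = Real.arccos (x i / maxEntry n x))
    (δ : ℝ) (αt : Fin (2 ^ n) → ℝ)
    (hαt : ∀ i, 0 ≤ αt i ∧ αt i ≤ α i ∧ α i - αt i < δ) :
    Real.sqrt (∑ i,
      (Real.cos (α i) / Real.sqrt (∑ j, Real.cos (α j) ^ 2) -
        Real.cos (αt i) / Real.sqrt (∑ j, Real.cos (αt j) ^ 2)) ^ 2) ≤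
      2 ^ (2 * n + 1) * δ := by
  set a : EuclideanSpace ℝ (Fin (2 ^ n)) := WithLp.toLp 2 fun i => Real.cos (α i)
  set b : EuclideanSpace ℝ (Fin (2 ^ n)) := WithLp.toLp 2 fun i => Real.cos (αt i)
  have ha : 1 ≤ ‖a‖ := by
    obtain ⟨j, hj⟩ := exists_eq_maxEntry x
    have haj : a j = 1 := by
      simp [a, hα, hj, (maxEntry_pos hx0 hxnn).ne']
    simpa [haj] using PiLp.norm_apply_le a j
  have hab : ‖a - b‖ ≤ √(2 ^ n) * δ := by
    have hcos : ∀ i, |(a - b) i| ≤ δ := fun i => by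
      obtain ⟨-, hle, hlt⟩ := hαt i
      exact (Real.abs_cos_sub_cos_le _ _).trans (abs_le.mpr ⟨by linarith, by linarith⟩)
    simpa using EuclideanSpace.norm_le_sqrt_card_mul hcos
  have hδ : 0 ≤ δ := by linarith [hαt ⟨0, Nat.two_pow_pos n⟩]
  have hsqrt : √(2 ^ n : ℝ) ≤ 2 ^ (2 * n) :=
    (Real.sqrt_le_self_iff.mpr (Or.inr (one_le_pow₀ one_le_two))).trans
      (pow_le_pow_right₀ one_le_two (by omega))
  rw [← EuclideanSpace.norm_normalize_toLp_sub_normalize_toLp]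
  calc ‖NormedSpace.normalize a - NormedSpace.normalize b‖ ≤ 2 * ‖a - b‖ / ‖a‖ :=
        norm_normalize_sub_normalize_le (norm_pos_iff.mp (one_pos.trans_le ha)) b
    _ ≤ 2 * ‖a - b‖ := div_le_self (by positivity) ha
    _ ≤ 2 * (2 ^ (2 * n) * δ) := by gcongr; exact hab.trans (by gcongr)
    _ = 2 ^ (2 * n + 1) * δ := by ring

/-- Fidelity bound for the probabilistic state-preparation algorithm.
For a nonzero `x ∈ ℝ^{2^n}` with nonnegative entries, angles
`α_i = arccos(x_i / max_j x_j)` and approximate angles `α̃_i` with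
`0 ≤ α̃_i ≤ α_i` and `α_i − α̃_i < δ`, the unit vectors with entries
`cos α_i / √(Σ_j cos² α_j)` and `cos α̃_i / √(Σ_j cos² α̃_j)` are within
Euclidean distance `2^{2n+1}·δ`. -/
theorem probabilistic_fidelity (n : ℕ) (hn : 1 ≤ n) (x : Fin (2 ^ n) → ℝ)
    (hx0 : x ≠ 0) (hxnn : ∀ i, 0 ≤ x i)
    (α : Fin (2 ^ n) → ℝ)
    (hα : ∀ i, α i = Real.arccos (x i / maxEntry n x))
    (δ : ℝ) (hδ : 0 < δ) (αt : Fin (2 ^ n) → ℝ)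
    (hαt : ∀ i, 0 ≤ αt i ∧ αt i ≤ α i ∧ α i - αt i < δ) :
    Real.sqrt (∑ i,
      (Real.cos (α i) / Real.sqrt (∑ j, Real.cos (α j) ^ 2) -
        Real.cos (αt i) / Real.sqrt (∑ j, Real.cos (αt j) ^ 2)) ^ 2) ≤
      2 ^ (2 * n + 1) * δ :=
  probabilistic_fidelity_general n x hx0 hxnn α hα δ αt hαt
end

section
/- Let n ≥ 2, N = 2^n, and let x ∈ ℂ^N be a nonzero vector with polar decomposition x_i = r_i e^{iθ_i}, r_i ≥ 0, θ_i ∈ [0,2π). Let ε > 0, and set t = ⌈log₂(2(n−1)√2·π/ε)⌉ + 1 and t' = n + 1 + ⌈log₂(2π/ε)⌉. Let p_i = r_i²/‖x‖², let x̃_R ∈ ℝ^N be produced by the deterministic iterative construction from any angle approximations α̃^k_j with α̃^0_0 = α^0_0 and |α̃^k_j − α^k_j| ≤ π/2^{t−1} (1 ≤ k ≤ n−1), and let θ̃_i ∈ ℝ satisfy |θ_i − θ̃_i| ≤ 2π/2^{t'}. Define x̃ ∈ ℂ^N by x̃_i = e^{iθ̃_i}·(x̃_R)_i. Then the Euclidean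 distance satisfies ‖x/‖x‖ − x̃‖ ≤ ε. -/
/-!
Insert the intermediate vector `√p ⊙ e^{iθ̃}` and use the triangle inequality. Everything rests on
`‖a e^{iφ} − b e^{iψ}‖ ≤ |a − b| + |a| |φ − ψ|` (chord ≤ arc), applied coordinatewise and summed
by Minkowski: changing the phases costs at most `2π/2^{t'} · ‖√p‖ = 2π/2^{t'}` on top of the
amplitude error `‖√p − x̃_R‖`. Pairing the coordinates `2j, 2j+1` into one complex coordinate turns
a level of the construction into `v ↦ v e^{iα}`, so each level `k ≥ 1` adds at most
`π/2^{t−1} · ‖√p^k‖ = π/2^{t−1}` to the amplitude error, while level 1 is exact. The choice of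
`t, t'` makes both contributions at most `ε/2`.
-/

/-- The index `2j : Fin (2^(k+1))` of an index `j : Fin (2^k)`. -/
def dbl {k : ℕ} (j : Fin (2 ^ k)) : Fin (2 ^ (k + 1)) :=
  ⟨2 * j.val, by have := j.isLt; simp only [pow_succ]; omega⟩

/-- The index `2j+1 : Fin (2^(k+1))` of an index `j : Fin (2^k)`. -/
def dbl1 {k : ℕ} (j : Fin (2 ^ k)) : Fin (2 ^ (k + 1)) :=
  ⟨2 * j.val + 1, by have := j.isLt; simp only [pow_succ]; omega⟩

open Real Complex

theorem sum_eq_sum_dbl_add_dbl1 {M : Type*} [AddCommMonoid M] {k : ℕ}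
    (f : Fin (2 ^ (k + 1)) → M) :
    ∑ i, f i = ∑ j, (f (dbl j) + f (dbl1 j)) := by
  have : ∑ i, f i = ∑ p : Fin (2 ^ k) × Fin 2, f (finProdFinEquiv p) :=
    (Fintype.sum_equiv finProdFinEquiv _ _ fun _ => rfl).symm
  rw [this, Fintype.sum_prod_type]
  refine Finset.sum_congr rfl fun j _ => ?_
  rw [Fin.sum_univ_two]
  congr 2 <;> ext <;> simp [finProdFinEquiv, dbl, dbl1, add_comm]

theorem norm_exp_mul_I_sub_exp_mul_I_le (φ ψ : ℝ) :
    ‖exp (φ * I) - exp (ψ * I)‖ ≤ |φ - ψ| := by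
  have h : exp (φ * I) - exp (ψ * I) = exp (ψ * I) * (exp (I * ↑(φ - ψ)) - 1) := by
    rw [mul_sub, ← Complex.exp_add]; push_cast; ring_nf
  rw [h, norm_mul, norm_exp_ofReal_mul_I, one_mul]
  exact Real.norm_exp_I_mul_ofReal_sub_one_le

theorem norm_ofReal_mul_exp_sub_ofReal_mul_exp_le (a b φ ψ : ℝ) :
    ‖(a : ℂ) * exp (φ * I) - b * exp (ψ * I)‖ ≤ |a - b| + |a| * |φ - ψ| := by
  have h : (a : ℂ) * exp (φ * I) - b * exp (ψ * I)
      = ((a - b : ℝ) : ℂ) * exp (ψ * I) + a * (exp (φ * I) - exp (ψ * I)) := by push_cast; ring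
  calc _ ≤ ‖((a - b : ℝ) : ℂ) * exp (ψ * I)‖ + ‖(a : ℂ) * (exp (φ * I) - exp (ψ * I))‖ :=
        h ▸ norm_add_le _ _
    _ ≤ |a - b| + |a| * |φ - ψ| := by
        rw [norm_mul, norm_mul, norm_exp_ofReal_mul_I, mul_one, norm_real, norm_real,
          Real.norm_eq_abs, Real.norm_eq_abs]
        gcongr
        exact norm_exp_mul_I_sub_exp_mul_I_le φ ψ

theorem EuclideanSpace.norm_le_norm_of_forall_norm_apply_le {𝕜 𝕜' ι : Type*} [RCLike 𝕜]
    [RCLike 𝕜'] [Fintype ι] {u : EuclideanSpace 𝕜 ι} {v : EuclideanSpace 𝕜' ι}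
    (h : ∀ i, ‖u i‖ ≤ ‖v i‖) :
    ‖u‖ ≤ ‖v‖ := by
  rw [EuclideanSpace.norm_eq, EuclideanSpace.norm_eq]
  gcongr with i
  exact h i

theorem norm_sub_le_of_phase_sub_le {ι : Type*} [Fintype ι] {a b : EuclideanSpace ℝ ι}
    {z w : EuclideanSpace ℂ ι} {φ ψ : ι → ℝ} {δ : ℝ} (hδ : 0 ≤ δ)
    (hz : ∀ i, z i = a i * exp (φ i * I)) (hw : ∀ i, w i = b i * exp (ψ i * I))
    (hφψ : ∀ i, |φ i - ψ i| ≤ δ) :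
    ‖z - w‖ ≤ ‖a - b‖ + δ * ‖a‖ := by
  set y : EuclideanSpace ℝ ι :=
    WithLp.toLp 2 (fun i => |a i - b i|) + δ • WithLp.toLp 2 (fun i => |a i|)
  have hzw : ‖z - w‖ ≤ ‖y‖ := by
    refine EuclideanSpace.norm_le_norm_of_forall_norm_apply_le fun i => ?_
    calc ‖(z - w) i‖ ≤ |a i - b i| + |a i| * |φ i - ψ i| := by
          simpa [hz, hw] using norm_ofReal_mul_exp_sub_ofReal_mul_exp_le (a i) (b i) (φ i) (ψ i)
      _ ≤ |a i - b i| + δ * |a i| := by rw [mul_comm]; gcongr; exact hφψ i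
      _ ≤ ‖y i‖ := by simp [y, Real.norm_eq_abs, le_abs_self]
  calc ‖z - w‖ ≤ ‖y‖ := hzw
    _ ≤ ‖WithLp.toLp 2 (fun i => |a i - b i|)‖ + δ * ‖WithLp.toLp 2 (fun i => |a i|)‖ := by
        refine (norm_add_le _ _).trans_eq ?_
        rw [norm_smul, Real.norm_of_nonneg hδ]
    _ ≤ ‖a - b‖ + δ * ‖a‖ := by
        gcongr <;> exact EuclideanSpace.norm_le_norm_of_forall_norm_apply_le fun i => by simp

theorem norm_sub_le_of_split {k : ℕ} {V W : EuclideanSpace ℝ (Fin (2 ^ (k + 1)))}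
    {v w : EuclideanSpace ℝ (Fin (2 ^ k))} {β γ : Fin (2 ^ k) → ℝ} {δ : ℝ} (hδ : 0 ≤ δ)
    (hV : ∀ j, V (dbl j) = v j * Real.cos (β j) ∧ V (dbl1 j) = v j * Real.sin (β j))
    (hW : ∀ j, W (dbl j) = w j * Real.cos (γ j) ∧ W (dbl1 j) = w j * Real.sin (γ j))
    (hβγ : ∀ j, |β j - γ j| ≤ δ) :
    ‖V - W‖ ≤ ‖v - w‖ + δ * ‖v‖ := by
  let z : EuclideanSpace ℂ (Fin (2 ^ k)) := WithLp.toLp 2 fun j => v j * exp (β j * I)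
  let ζ : EuclideanSpace ℂ (Fin (2 ^ k)) := WithLp.toLp 2 fun j => w j * exp (γ j * I)
  have hpair : ∀ j, z j - ζ j = ((V - W) (dbl j) : ℂ) + ((V - W) (dbl1 j) : ℂ) * I := by
    intro j
    simp only [z, ζ, PiLp.sub_apply, (hV j).1, (hV j).2, (hW j).1, (hW j).2, exp_mul_I]
    push_cast
    ring
  have hnorm : ‖V - W‖ = ‖z - ζ‖ := by
    rw [← sq_eq_sq₀ (norm_nonneg _) (norm_nonneg _), EuclideanSpace.real_norm_sq_eq,
      EuclideanSpace.norm_sq_eq, sum_eq_sum_dbl_add_dbl1]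
    simp only [PiLp.sub_apply, hpair, Complex.sq_norm, normSq_add_mul_I]
  exact hnorm ▸ norm_sub_le_of_phase_sub_le hδ (fun _ => rfl) (fun _ => rfl) hβγ

theorem sum_marginal_eq {n : ℕ} {pm : ∀ k : ℕ, Fin (2 ^ k) → ℝ}
    (hpm : ∀ k < n, ∀ j, pm k j = pm (k + 1) (dbl j) + pm (k + 1) (dbl1 j)) {k : ℕ} (hk : k ≤ n) :
    ∑ j, pm k j = ∑ i, pm n i := by
  induction hk using Nat.decreasingInduction with
  | self => rfl
  | of_succ k hk ih =>
    rw [← ih, sum_eq_sum_dbl_add_dbl1]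
    exact Finset.sum_congr rfl fun j _ => hpm k hk j

theorem marginal_nonneg {n : ℕ} {pm : ∀ k : ℕ, Fin (2 ^ k) → ℝ}
    (hpm : ∀ k < n, ∀ j, pm k j = pm (k + 1) (dbl j) + pm (k + 1) (dbl1 j))
    (hnonneg : ∀ i, 0 ≤ pm n i) {k : ℕ} (hk : k ≤ n) (j : Fin (2 ^ k)) : 0 ≤ pm k j := by
  induction hk using Nat.decreasingInduction with
  | self => exact hnonneg j
  | of_succ k hk ih => rw [hpm k hk j]; exact add_nonneg (ih _) (ih _)

theorem sqrt_eq_sqrt_add_mul_cos_and_sin {a b α : ℝ} (ha : 0 ≤ a) (hb : 0 ≤ b)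
    (hα : 0 < a + b → α = Real.arccos (√(a / (a + b)))) :
    √a = √(a + b) * Real.cos α ∧ √b = √(a + b) * Real.sin α := by
  rcases (add_nonneg ha hb).eq_or_lt with hs | hs
  · obtain ⟨rfl, rfl⟩ : a = 0 ∧ b = 0 := ⟨by linarith, by linarith⟩
    simp
  have hq : a / (a + b) ≤ 1 := (div_le_one hs).2 (by linarith)
  rw [hα hs, Real.cos_arccos (by linarith [Real.sqrt_nonneg (a / (a + b))])
    (Real.sqrt_le_one.2 hq), Real.sin_arccos, Real.sq_sqrt (by positivity), ← Real.sqrt_mul hs.le,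
    ← Real.sqrt_mul hs.le]
  constructor
  · congr 1; field_simp
  · congr 1; field_simp; ring

theorem EuclideanSpace.norm_toLp_sqrt {ι : Type*} [Fintype ι] {q : ι → ℝ} (hq : ∀ i, 0 ≤ q i) :
    ‖(WithLp.toLp 2 fun i => √(q i) : EuclideanSpace ℝ ι)‖ = √(∑ i, q i) := by
  simp [EuclideanSpace.norm_eq, Real.sq_sqrt (hq _)]

theorem norm_sub_le_of_splits {n m : ℕ} {X Y : ∀ k, EuclideanSpace ℝ (Fin (2 ^ k))}
    {β γ : ∀ k, Fin (2 ^ k) → ℝ} {δ : ℝ} (hδ : 0 ≤ δ)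
    (hX : ∀ k, m ≤ k → k < n → ∀ j,
      X (k + 1) (dbl j) = X k j * Real.cos (β k j) ∧ X (k + 1) (dbl1 j) = X k j * Real.sin (β k j))
    (hY : ∀ k, m ≤ k → k < n → ∀ j,
      Y (k + 1) (dbl j) = Y k j * Real.cos (γ k j) ∧ Y (k + 1) (dbl1 j) = Y k j * Real.sin (γ k j))
    (hβγ : ∀ k, m ≤ k → k < n → ∀ j, |β k j - γ k j| ≤ δ)
    (hXnorm : ∀ k, m ≤ k → k < n → ‖X k‖ ≤ 1) :
    ∀ k, m ≤ k → k ≤ n → ‖X k - Y k‖ ≤ ‖X m - Y m‖ + (k - m) * δ := by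
  intro k hmk
  induction k, hmk using Nat.le_induction with
  | base => simp
  | succ k hmk ih =>
    intro hkn
    calc ‖X (k + 1) - Y (k + 1)‖ ≤ ‖X k - Y k‖ + δ * ‖X k‖ :=
          norm_sub_le_of_split hδ (hX k hmk hkn) (hY k hmk hkn) (hβγ k hmk hkn)
      _ ≤ ‖X m - Y m‖ + (k - m) * δ + δ * 1 := by
          gcongr
          exacts [ih (by omega), hXnorm k hmk hkn]
      _ = ‖X m - Y m‖ + ((k + 1 : ℕ) - m) * δ := by push_cast; ring

theorem norm_sqrt_marginal_sub_le {n : ℕ} (hn : 1 ≤ n) {pm α αt xtR : ∀ k : ℕ, Fin (2 ^ k) → ℝ}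
    {δ : ℝ} (hδ : 0 ≤ δ)
    (hpm : ∀ k < n, ∀ j, pm k j = pm (k + 1) (dbl j) + pm (k + 1) (dbl1 j))
    (hnonneg : ∀ i, 0 ≤ pm n i) (hsum : ∑ i, pm n i = 1)
    (hα : ∀ k < n, ∀ j, 0 < pm k j → α k j = Real.arccos (√(pm (k + 1) (dbl j) / pm k j)))
    (hαt0 : αt 0 = α 0) (hαt : ∀ k, 1 ≤ k → k < n → ∀ j, |αt k j - α k j| ≤ δ)
    (hxtR1 : ∀ j : Fin (2 ^ 1),
      xtR 1 j = if j.val = 0 then Real.cos (αt 0 0) else Real.sin (αt 0 0))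
    (hxtRrec : ∀ k, 1 ≤ k → k < n → ∀ j,
      xtR (k + 1) (dbl j) = xtR k j * Real.cos (αt k j) ∧
      xtR (k + 1) (dbl1 j) = xtR k j * Real.sin (αt k j)) :
    ‖(WithLp.toLp 2 fun i => √(pm n i) : EuclideanSpace ℝ (Fin (2 ^ n))) - WithLp.toLp 2 (xtR n)‖
      ≤ (n - 1) * δ := by
  set X : ∀ k, EuclideanSpace ℝ (Fin (2 ^ k)) := fun k => WithLp.toLp 2 fun j => √(pm k j)
  set Y : ∀ k, EuclideanSpace ℝ (Fin (2 ^ k)) := fun k => WithLp.toLp 2 (xtR k)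
  have hexact : ∀ k < n, ∀ j, √(pm (k + 1) (dbl j)) = √(pm k j) * Real.cos (α k j) ∧
      √(pm (k + 1) (dbl1 j)) = √(pm k j) * Real.sin (α k j) := by
    intro k hk j
    rw [hpm k hk j]
    refine sqrt_eq_sqrt_add_mul_cos_and_sin (marginal_nonneg hpm hnonneg hk _)
      (marginal_nonneg hpm hnonneg hk _) fun h => ?_
    rw [← hpm k hk j] at h ⊢
    exact hα k hk j h
  have hnorm : ∀ k ≤ n, ‖X k‖ = 1 := fun k hk => by
    rw [EuclideanSpace.norm_toLp_sqrt (marginal_nonneg hpm hnonneg hk), sum_marginal_eq hpm hk,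
      hsum, Real.sqrt_one]
  have hbase : X 1 = Y 1 := by
    have hpm0 : pm 0 0 = 1 := by simpa using (sum_marginal_eq hpm (Nat.zero_le n)).trans hsum
    obtain ⟨hcos, hsin⟩ := hexact 0 hn 0
    ext i
    fin_cases i
    · simpa [X, Y, hxtR1, hαt0, hpm0, dbl] using hcos
    · simpa [X, Y, hxtR1, hαt0, hpm0, dbl1] using hsin
  have := norm_sub_le_of_splits (X := X) (Y := Y) hδ (fun k _ hk => hexact k hk) hxtRrec
    (fun k hk hkn j => abs_sub_comm (αt k j) (α k j) ▸ hαt k hk hkn j)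
    (fun k _ hk => (hnorm k hk.le).le) n hn le_rfl
  rwa [hbase, sub_self, norm_zero, zero_add, Nat.cast_one] at this

theorem div_two_zpow_le_of_ceil_logb_le {a C : ℝ} (ha : 0 ≤ a) (hC : 0 < C) {t : ℤ}
    (ht : ⌈Real.logb 2 C⌉ ≤ t) : a / 2 ^ t ≤ a / C := by
  have hCt : C ≤ 2 ^ ⌈Real.logb 2 C⌉ := by
    rw [← Real.rpow_intCast, ← Real.logb_le_iff_le_rpow one_lt_two hC]
    exact Int.le_ceil _
  exact div_le_div_of_nonneg_left ha hC (hCt.trans (zpow_le_zpow_right₀ one_le_two ht))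

theorem sub_one_mul_pi_div_two_zpow_le {n : ℕ} (hn : 2 ≤ n) {ε : ℝ} (hε : 0 < ε) {t : ℤ}
    (ht : t = ⌈Real.logb 2 (2 * ((n : ℝ) - 1) * √2 * π / ε)⌉ + 1) :
    ((n : ℝ) - 1) * (π / 2 ^ (t - 1)) ≤ ε / 2 := by
  have hn1 : 0 < (n : ℝ) - 1 := by
    have : (2 : ℝ) ≤ n := by exact_mod_cast hn
    linarith
  have hs2 : 1 ≤ √2 := Real.one_le_sqrt.2 one_le_two
  calc ((n : ℝ) - 1) * (π / 2 ^ (t - 1))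
      ≤ ((n : ℝ) - 1) * (π / (2 * ((n : ℝ) - 1) * √2 * π / ε)) := by
        refine mul_le_mul_of_nonneg_left ?_ hn1.le
        refine div_two_zpow_le_of_ceil_logb_le Real.pi_pos.le (by positivity) ?_
        omega
    _ = ε / 2 / √2 := by field_simp
    _ ≤ ε / 2 := div_le_self (by positivity) hs2

theorem two_mul_pi_div_two_zpow_le {n : ℕ} {ε : ℝ} (hε : 0 < ε) {t' : ℤ}
    (ht' : t' = n + 1 + ⌈Real.logb 2 (2 * π / ε)⌉) :
    2 * π / 2 ^ t' ≤ ε / 2 := by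
  calc 2 * π / 2 ^ t' = π / 2 ^ (t' - 1) := by
        rw [zpow_sub₀ two_ne_zero, zpow_one]; field_simp
    _ ≤ π / (2 * π / ε) := by
        refine div_two_zpow_le_of_ceil_logb_le Real.pi_pos.le (by positivity) ?_
        omega
    _ = ε / 2 := by field_simp

theorem deterministic_preparation_complex_general (n : ℕ) (hn : 2 ≤ n)
    (x : Fin (2 ^ n) → ℂ) (hxne : x ≠ 0)
    (r θ : Fin (2 ^ n) → ℝ) (hr : ∀ i, 0 ≤ r i)
    (hx : ∀ i, x i = (r i : ℂ) * Complex.exp (θ i * Complex.I))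
    (ε : ℝ) (hε : 0 < ε) (t t' : ℤ)
    (ht : t = ⌈Real.logb 2 (2 * ((n : ℝ) - 1) * Real.sqrt 2 * Real.pi / ε)⌉ + 1)
    (ht' : t' = n + 1 + ⌈Real.logb 2 (2 * Real.pi / ε)⌉)
    (p : Fin (2 ^ n) → ℝ)
    (hp : ∀ i, p i = r i ^ 2 / ∑ j, r j ^ 2)
    (pm : ∀ k : ℕ, Fin (2 ^ k) → ℝ)
    (hpmn : pm n = p)
    (hpm : ∀ k, k < n → ∀ j : Fin (2 ^ k),
      pm k j = pm (k + 1) (dbl j) + pm (k + 1) (dbl1 j))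
    (α : ∀ k : ℕ, Fin (2 ^ k) → ℝ)
    (hα : ∀ k, k < n → ∀ j : Fin (2 ^ k),
      (0 < pm k j →
        α k j = Real.arccos (Real.sqrt (pm (k + 1) (dbl j) / pm k j))) ∧
      (pm k j = 0 → α k j = 0))
    (αt : ∀ k : ℕ, Fin (2 ^ k) → ℝ)
    (hαt0 : αt 0 = α 0)
    (hαt : ∀ k, 1 ≤ k → k ≤ n - 1 → ∀ j : Fin (2 ^ k),
      |αt k j - α k j| ≤ Real.pi / (2 : ℝ) ^ (t - 1))
    (xtR : ∀ k : ℕ, Fin (2 ^ k) → ℝ)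
    (hxtR1 : ∀ j : Fin (2 ^ 1),
      xtR 1 j = if j.val = 0 then Real.cos (αt 0 0) else Real.sin (αt 0 0))
    (hxtRrec : ∀ k, 1 ≤ k → k ≤ n - 1 → ∀ j : Fin (2 ^ k),
      xtR (k + 1) (dbl j) = xtR k j * Real.cos (αt k j) ∧
      xtR (k + 1) (dbl1 j) = xtR k j * Real.sin (αt k j))
    (θt : Fin (2 ^ n) → ℝ)
    (hθt : ∀ i, |θ i - θt i| ≤ 2 * Real.pi / (2 : ℝ) ^ t')
    (xt : Fin (2 ^ n) → ℂ)
    (hxt : ∀ i, xt i = Complex.exp (θt i * Complex.I) * (xtR n i : ℂ)) :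
    Real.sqrt (∑ i, ‖
        x i / (Real.sqrt (∑ j, r j ^ 2) : ℂ) - xt i‖ ^ 2) ≤ ε := by
  set S := ∑ j, r j ^ 2
  have hS : 0 < S := by
    obtain ⟨i, hi⟩ := Function.ne_iff.1 hxne
    have hri : r i ≠ 0 := fun h => hi (by simp [hx i, h])
    exact lt_of_lt_of_le (by positivity) (Finset.single_le_sum (fun j _ => sq_nonneg (r j))
      (Finset.mem_univ i))
  have hp_nonneg : ∀ i, 0 ≤ pm n i := fun i => hpmn ▸ hp i ▸ by positivity
  have hp_sum : ∑ i, pm n i = 1 := by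
    simp only [hpmn, hp, ← Finset.sum_div]
    exact div_self hS.ne'
  have hamp := norm_sqrt_marginal_sub_le (by omega) (by positivity) hpm hp_nonneg hp_sum
    (fun k hk j => (hα k hk j).1) hαt0 (fun k hk hkn => hαt k hk (by omega)) hxtR1
    (fun k hk hkn => hxtRrec k hk (by omega))
  have hnormalized : ∀ i, x i / (√S : ℂ) = √(pm n i) * Complex.exp (θ i * Complex.I) := by
    intro i
    rw [hx i, hpmn, hp i, Real.sqrt_div (sq_nonneg _), Real.sqrt_sq (hr i)]
    push_cast
    ring
  have hphase := norm_sub_le_of_phase_sub_le (a := WithLp.toLp 2 fun i => √(pm n i))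
    (b := WithLp.toLp 2 (xtR n)) (z := WithLp.toLp 2 fun i => x i / (√S : ℂ))
    (w := WithLp.toLp 2 xt) (by positivity) hnormalized (fun i => (hxt i).trans (mul_comm _ _))
    hθt
  rw [EuclideanSpace.norm_toLp_sqrt hp_nonneg, hp_sum, Real.sqrt_one, mul_one] at hphase
  calc _ = ‖(WithLp.toLp 2 fun i => x i / (√S : ℂ)) - WithLp.toLp 2 xt‖ := by
        rw [EuclideanSpace.norm_eq]; rfl
    _ ≤ ((n : ℝ) - 1) * (π / 2 ^ (t - 1)) + 2 * π / 2 ^ t' := hphase.trans (add_le_add_left hamp _)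
    _ ≤ ε / 2 + ε / 2 := add_le_add (sub_one_mul_pi_div_two_zpow_le hn hε ht)
        (two_mul_pi_div_two_zpow_le hε ht')
    _ = ε := add_halves ε

/-- Overall fidelity of the deterministic state-preparation algorithm for a
complex vector `x` with polar decomposition `x_i = r_i e^{iθ_i}`: with
`t = ⌈log₂(2(n−1)√2·π/ε)⌉ + 1` bits for the amplitude angles and
`t' = n + 1 + ⌈log₂(2π/ε)⌉` bits for the phases, the prepared vector
`x̃_i = e^{iθ̃_i}(x̃_R)_i` satisfies `‖x/‖x‖ − x̃‖ ≤ ε`. -/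
theorem deterministic_preparation_complex (n : ℕ) (hn : 2 ≤ n)
    (x : Fin (2 ^ n) → ℂ) (hxne : x ≠ 0)
    (r θ : Fin (2 ^ n) → ℝ) (hr : ∀ i, 0 ≤ r i)
    (hθr : ∀ i, θ i ∈ Set.Ico 0 (2 * Real.pi))
    (hx : ∀ i, x i = (r i : ℂ) * Complex.exp (θ i * Complex.I))
    (ε : ℝ) (hε : 0 < ε) (t t' : ℤ)
    (ht : t = ⌈Real.logb 2 (2 * ((n : ℝ) - 1) * Real.sqrt 2 * Real.pi / ε)⌉ + 1)
    (ht' : t' = n + 1 + ⌈Real.logb 2 (2 * Real.pi / ε)⌉)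
    (p : Fin (2 ^ n) → ℝ)
    (hp : ∀ i, p i = r i ^ 2 / ∑ j, r j ^ 2)
    (pm : ∀ k : ℕ, Fin (2 ^ k) → ℝ)
    (hpmn : pm n = p)
    (hpm : ∀ k, k < n → ∀ j : Fin (2 ^ k),
      pm k j = pm (k + 1) (dbl j) + pm (k + 1) (dbl1 j))
    (α : ∀ k : ℕ, Fin (2 ^ k) → ℝ)
    (hα : ∀ k, k < n → ∀ j : Fin (2 ^ k),
      (0 < pm k j →
        α k j = Real.arccos (Real.sqrt (pm (k + 1) (dbl j) / pm k j))) ∧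
      (pm k j = 0 → α k j = 0))
    (αt : ∀ k : ℕ, Fin (2 ^ k) → ℝ)
    (hαt0 : αt 0 = α 0)
    (hαt : ∀ k, 1 ≤ k → k ≤ n - 1 → ∀ j : Fin (2 ^ k),
      |αt k j - α k j| ≤ Real.pi / (2 : ℝ) ^ (t - 1))
    (xtR : ∀ k : ℕ, Fin (2 ^ k) → ℝ)
    (hxtR1 : ∀ j : Fin (2 ^ 1),
      xtR 1 j = if j.val = 0 then Real.cos (αt 0 0) else Real.sin (αt 0 0))
    (hxtRrec : ∀ k, 1 ≤ k → k ≤ n - 1 → ∀ j : Fin (2 ^ k),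
      xtR (k + 1) (dbl j) = xtR k j * Real.cos (αt k j) ∧
      xtR (k + 1) (dbl1 j) = xtR k j * Real.sin (αt k j))
    (θt : Fin (2 ^ n) → ℝ)
    (hθt : ∀ i, |θ i - θt i| ≤ 2 * Real.pi / (2 : ℝ) ^ t')
    (xt : Fin (2 ^ n) → ℂ)
    (hxt : ∀ i, xt i = Complex.exp (θt i * Complex.I) * (xtR n i : ℂ)) :
    Real.sqrt (∑ i, ‖
        x i / (Real.sqrt (∑ j, r j ^ 2) : ℂ) - xt i‖ ^ 2) ≤ ε :=
  deterministic_preparation_complex_general n hn x hxne r θ hr hx ε hε t t' ht ht' p hp pm hpmn hpm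
    α hα αt hαt0 hαt xtR hxtR1 hxtRrec θt hθt xt hxt
end
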